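/- The wheel graph W_4 does not admit a link-irregular labeling; that is, η(W_4) = ∞. -/

import Mathlib

open SimpleGraph

variable {V : Type*}

/-- Two vertices have isomorphic labeled links: an equivalence of neighborhoods preserving
adjacency and edge labels. -/
def LabeledLinkIso (G : SimpleGraph V) (ℓ : Sym2 V → ℕ+) (u v : V) : Prop :=
  ∃ e : (G.neighborSet u) ≃ (G.neighborSet v),
    (∀ a b : G.neighborSet u, G.Adj a.1 b.1 ↔ G.Adj (e a).1 (e b).1) ∧
    (∀ a b : G.neighborSet u, G.Adj a.1 b.1 → ℓ s(a.1, b.1) = ℓ s((e a).1, (e b).1))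

/-- An edge labeling is link-irregular if distinct vertices have non-isomorphic labeled links. -/
def IsLinkIrregular (G : SimpleGraph V) (ℓ : Sym2 V → ℕ+) : Prop :=
  ∀ u v : V, u ≠ v → ¬ LabeledLinkIso G ℓ u v

/-- A graph admits a link-irregular labeling. -/
def HasLinkIrregularLabeling (G : SimpleGraph V) : Prop :=
  ∃ ℓ : Sym2 V → ℕ+, IsLinkIrregular G ℓ

/-- The link-irregular labeling number η(G): the minimum number of distinct labels used
on the edges of G over all link-irregular labelings, or ∞ if none exists. -/
noncomputable def linkIrregularNumber (G : SimpleGraph V) : ℕ∞ :=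
  sInf {c : ℕ∞ | ∃ ℓ : Sym2 V → ℕ+, IsLinkIrregular G ℓ ∧ c = ((ℓ '' G.edgeSet).ncard : ℕ∞)}

/-- The edge set of the link of x, viewed as a set of edges of G. -/
def linkEdgeSet (G : SimpleGraph V) (x : V) : Set (Sym2 V) :=
  {e | e ∈ G.edgeSet ∧ ∀ v ∈ e, v ∈ G.neighborSet x}

/-- Active neighborhood. -/
def activeNeighborSet (G : SimpleGraph V) (x : V) : Set V :=
  {u ∈ G.neighborSet x | ∃ w ∈ G.neighborSet x, G.Adj u w}

/-- A graph is cut-irregular if distinct vertex-deleted subgraphs are non-isomorphic. -/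
def CutIrregular (H : SimpleGraph V) : Prop :=
  ∀ u v : V, u ≠ v → ¬ Nonempty ((H.induce ({u} : Set V)ᶜ) ≃g (H.induce ({v} : Set V)ᶜ))

/-- The wheel graph W_n: a cycle C_n together with a universal vertex. -/
def wheelGraph (n : ℕ) : SimpleGraph (Option (Fin n)) where
  Adj x y :=
    match x, y with
    | none, none => False
    | none, some _ => True
    | some _, none => True
    | some i, some j => (cycleGraph n).Adj i j
  symm := by
    constructor
    rintro (_|i) (_|j) h
    · exact h
    · trivial
    · trivial
    · exact h.symm
  loopless := by
    constructor
    rintro (_|i) h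
    · exact h
    · exact (cycleGraph n).irrefl h

/-- The join of two graphs. -/
def graphJoin {W : Type*} (G : SimpleGraph V) (H : SimpleGraph W) : SimpleGraph (V ⊕ W) where
  Adj x y :=
    match x, y with
    | Sum.inl a, Sum.inl b => G.Adj a b
    | Sum.inr a, Sum.inr b => H.Adj a b
    | _, _ => True
  symm := by
    constructor
    rintro (a|a) (b|b) h
    · exact h.symm
    · trivial
    · trivial
    · exact h.symm
  loopless := by
    constructor
    rintro (a|a) h
    · exact G.irrefl h
    · exact H.irrefl h

/-- The hypercube graph Q_n. -/
def hypercubeGraph (n : ℕ) : SimpleGraph (Fin n → Bool) where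
  Adj x y := (Finset.univ.filter fun i => x i ≠ y i).card = 1
  symm := by
    constructor
    intro x y h
    have : (Finset.univ.filter fun i => y i ≠ x i) = (Finset.univ.filter fun i => x i ≠ y i) := by
      apply Finset.filter_congr
      intro i _
      simp [ne_comm]
    rw [this]
    exact h
  loopless := by
    constructor
    intro x h
    simp at h

/-! The opposite rim vertices `0` and `2` of `W₄` have the same neighbourhood, so the identity is
an isomorphism of their labeled links whatever the labeling. -/

theorem labeledLinkIso_of_neighborSet_eq {G : SimpleGraph V} (ℓ : Sym2 V → ℕ+) {u v : V}
    (h : G.neighborSet u = G.neighborSet v) : LabeledLinkIso G ℓ u v :=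
  ⟨Equiv.setCongr h, fun _ _ => Iff.rfl, fun _ _ _ => rfl⟩

theorem not_hasLinkIrregularLabeling_of_neighborSet_eq {G : SimpleGraph V} {u v : V}
    (huv : u ≠ v) (h : G.neighborSet u = G.neighborSet v) : ¬ HasLinkIrregularLabeling G :=
  fun ⟨ℓ, hℓ⟩ => hℓ u v huv (labeledLinkIso_of_neighborSet_eq ℓ h)

theorem linkIrregularNumber_eq_top {G : SimpleGraph V} (h : ¬ HasLinkIrregularLabeling G) :
    linkIrregularNumber G = ⊤ := by
  rw [linkIrregularNumber, sInf_eq_top]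
  rintro _ ⟨ℓ, hℓ, -⟩
  exact absurd ⟨ℓ, hℓ⟩ h

theorem wheelGraph_four_neighborSet_some_zero_eq_some_two :
    (wheelGraph 4).neighborSet (some 0) = (wheelGraph 4).neighborSet (some 2) := by
  ext (_ | j)
  · exact Iff.rfl
  · exact (by decide : ∀ j : Fin 4, (cycleGraph 4).Adj 0 j ↔ (cycleGraph 4).Adj 2 j) j

/-- η(W_4) = ∞, i.e. W_4 admits no link-irregular labeling. -/
theorem stmt_7 :
    ¬ HasLinkIrregularLabeling (wheelGraph 4) ∧ linkIrregularNumber (wheelGraph 4) = ⊤ := by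
  have h : ¬ HasLinkIrregularLabeling (wheelGraph 4) :=
    not_hasLinkIrregularLabeling_of_neighborSet_eq (by decide)
      wheelGraph_four_neighborSet_some_zero_eq_some_two
  exact ⟨h, linkIrregularNumber_eq_top h⟩
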